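/- Let g ≥ 2 be an integer and r a positive integer. Define, for real t > 0 with t ≠ 1, Q̄(t) = t^{−2r²(g−1)} · Q^{ℍ}_{g}(2r)(t). Then Q̄(1/t) = −Q̄(t) for all real t > 0 with t ≠ 1. -/

import Mathlib

/-!
Under `t ↦ 1/t` each numerator factor `1 + t^k` becomes `(1 + t^k)/t^k` and each denominator
factor `1 - t^k` becomes `-(1 - t^k)/t^k`. Summing the exponents, the numerator picks up
`t^(-4r²g)` and the `2r - 1` denominator factors pick up `-t^(-4r²)`, so
`QH(1/t) = -t^(4r²(1-g)) QH(t)`: this is exactly the antisymmetry of `t^(-2r²(g-1)) QH(t)`.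
-/

open Finset

noncomputable section

/-- `ang x` is `⟨x⟩ = ⌊x⌋ + 1 - x`, the unique element of `(0,1]` with `x + ⟨x⟩ ∈ ℤ`. -/
def ang (x : ℝ) : ℝ := (⌊x⌋ : ℝ) + 1 - x

/-- `Q^{ℍ}_{g}(2r)(t)`, the mod 2 Poincaré series of the classifying space of the quaternionic
gauge group of a rank `2r` quaternionic bundle on a Klein surface of genus `g` with real points. -/
def QH (g r : ℕ) (t : ℝ) : ℝ :=
  (∏ j ∈ Finset.range (2*r), (1 + t ^ (2*j+1)) ^ g) /
  ((∏ j ∈ Finset.range (r - 1), (1 - t ^ (4*j+4))) * ∏ j ∈ Finset.range r, (1 - t ^ (4*j+4)))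

theorem sum_range_two_mul_add_one (n : ℕ) : ∑ j ∈ range n, (2 * j + 1) = n ^ 2 := by
  induction n with
  | zero => simp
  | succ n ih => rw [sum_range_succ, ih]; ring

theorem sum_range_four_mul_add_four (n : ℕ) : ∑ j ∈ range n, (4 * j + 4) = 2 * n * (n + 1) := by
  induction n with
  | zero => simp
  | succ n ih => rw [sum_range_succ, ih]; ring

section InvPow

variable {K ι : Type*} [Field K] {t : K} (s : Finset ι) (e : ι → ℕ)

theorem prod_one_add_inv_pow (ht : t ≠ 0) :
    ∏ j ∈ s, (1 + t⁻¹ ^ e j) = (∏ j ∈ s, (1 + t ^ e j)) / t ^ (∑ j ∈ s, e j) := by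
  have hfactor : ∀ j ∈ s, 1 + t⁻¹ ^ e j = (1 + t ^ e j) / t ^ e j := by
    intro j _
    rw [inv_pow]
    field_simp
    ring
  rw [prod_congr rfl hfactor, prod_div_distrib, prod_pow_eq_pow_sum]

theorem prod_one_sub_inv_pow (ht : t ≠ 0) :
    ∏ j ∈ s, (1 - t⁻¹ ^ e j) = (-1) ^ #s * (∏ j ∈ s, (1 - t ^ e j)) / t ^ (∑ j ∈ s, e j) := by
  have hfactor : ∀ j ∈ s, 1 - t⁻¹ ^ e j = -1 * ((1 - t ^ e j) / t ^ e j) := by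
    intro j _
    rw [inv_pow]
    field_simp
    ring
  rw [prod_congr rfl hfactor, prod_mul_distrib, prod_const, prod_div_distrib,
    prod_pow_eq_pow_sum, mul_div_assoc]

end InvPow

theorem QH_inv (g : ℕ) {r : ℕ} (hr : 0 < r) {t : ℝ} (ht : t ≠ 0) :
    QH g r t⁻¹ = -(t ^ (4 * r ^ 2) / t ^ (4 * r ^ 2 * g)) * QH g r t := by
  obtain ⟨s, rfl⟩ : ∃ s, r = s + 1 := ⟨r - 1, by omega⟩
  unfold QH
  simp only [prod_pow, prod_one_add_inv_pow _ _ ht, prod_one_sub_inv_pow _ _ ht, card_range,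
    sum_range_two_mul_add_one, sum_range_four_mul_add_four, Nat.add_sub_cancel]
  have hsign : (-1 : ℝ) ^ s * (-1) ^ (s + 1) = -1 := by
    rw [← pow_add]; exact Odd.neg_one_pow ⟨s, by ring⟩
  have hden : t ^ (2 * s * (s + 1)) * t ^ (2 * (s + 1) * (s + 1 + 1)) = t ^ (4 * (s + 1) ^ 2) := by
    rw [← pow_add]; ring_nf
  rw [div_mul_div_comm, mul_mul_mul_comm, hsign, hden, div_div_eq_mul_div,
    show (2 * (s + 1)) ^ 2 = 4 * (s + 1) ^ 2 by ring]
  ring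

theorem stmt2_general (g r : ℕ) (hr : 0 < r)
    (t : ℝ) (ht : 0 < t) :
    (1/t) ^ (-2 * (r : ℝ)^2 * ((g : ℝ) - 1)) * QH g r (1/t) =
      -((t : ℝ) ^ (-2 * (r : ℝ)^2 * ((g : ℝ) - 1)) * QH g r t) := by
  set a : ℝ := -2 * (r : ℝ) ^ 2 * ((g : ℝ) - 1)
  have hweight : t ^ (-a) * (t ^ (4 * r ^ 2) / t ^ (4 * r ^ 2 * g)) = t ^ a := by
    rw [← Real.rpow_natCast, ← Real.rpow_natCast, ← Real.rpow_sub ht, ← Real.rpow_add ht]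
    congr 1
    push_cast
    ring
  rw [one_div, QH_inv g hr ht.ne', Real.inv_rpow ht.le, ← Real.rpow_neg ht.le]
  linear_combination (-QH g r t) * hweight

/-- `Q̄(1/t) = -Q̄(t)` for the normalized quaternionic-gauge-group Poincaré series. -/
theorem stmt2 (g r : ℕ) (hg : 2 ≤ g) (hr : 0 < r)
    (t : ℝ) (ht : 0 < t) (ht1 : t ≠ 1) :
    (1/t) ^ (-2 * (r : ℝ)^2 * ((g : ℝ) - 1)) * QH g r (1/t) =
      -((t : ℝ) ^ (-2 * (r : ℝ)^2 * ((g : ℝ) - 1)) * QH g r t) :=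
  stmt2_general g r hr t ht

end
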